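/- Under the setup of the preceding lemma, assume instead that there exist $N\in\mathbb{N}_0$ with $\sum_{k=0}^N\int_Y v_k\,d\mu>0$ and constants $C>0$, $K\in\mathbb{N}_0$ such that for all $n\ge N$, $C\sum_{k=0}^n\sum_{m=0}^K \hat T^m v_k \ge \sum_{k=0}^n\int_Y v_k\,d\mu$ a.e. on $Y$ (uniform sweeping of the Cesàro averages for $1_Y$). Then there exists $t_0>0$ such that for all $t\ge t_0$, $2C\sum_{m=0}^K\hat T^m H_t \ge 1_Y$ a.e.; i.e., $\{H_t\}_{t\ge t_0}$ is uniformly sweeping in $K$ steps for $1_Y$. -/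

import Mathlib

open MeasureTheory Filter Real Set
open scoped Topology ENNReal

/-- The Abel-type average `H_t` built from the sequence `v_n`. -/
noncomputable def Habel {X : Type*} [MeasurableSpace X] (μ : Measure X) (Y : Set X)
    (v : ℕ → X → ℝ≥0∞) (lam : ℝ → ℝ) (t : ℝ) (x : X) : ℝ≥0∞ :=
  (∑' n : ℕ, ENNReal.ofReal (Real.exp (-(n : ℝ) * lam t)) * v n x) /
  (∑' n : ℕ, ENNReal.ofReal (Real.exp (-(n : ℝ) * lam t)) * ∫⁻ y in Y, v n y ∂μ)

/-! Put `r = e^{-λ(t)}`, so that `H_t = (∑ rⁿ vₙ) / ∑ rⁿ ∫_Y vₙ`. Being dual to `Tᵐ`, the operator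
`T̂ᵐ` commutes a.e. with nonnegative series, so `∑_{m ≤ K} T̂ᵐ H_t` is the same Abel mean of
`wₙ = ∑_{m ≤ K} T̂ᵐ vₙ`. Abel summation `∑ rⁿ aₙ = ∑ (1 - r) rⁿ Sₙ(a)` turns Abel means into
weighted means of the partial sums `Sₙ`. Once `r^N ≥ 1/2`, the indices `n < N` carry total
weight `1 - r^N ≤ r^N`, the weight of the tail `n ≥ N`; as `Sₙ` is monotone, the head is thus
dominated by the tail, where `Sₙ(∫ v) ≤ C Sₙ(w)` holds. This costs the factor `2`. -/

section AbelSummation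

open Finset

theorem ENNReal.tsum_one_sub_mul_pow_add {r : ℝ≥0∞} (hr : r < 1) (k : ℕ) :
    ∑' i, (1 - r) * r ^ (i + k) = r ^ k := by
  simp_rw [pow_add, ENNReal.tsum_mul_left, ENNReal.tsum_mul_right, ENNReal.tsum_geometric,
    ← mul_assoc, ENNReal.mul_inv_cancel (tsub_pos_of_lt hr).ne' (by simp), one_mul]

theorem ENNReal.tsum_pow_mul_eq_tsum_mul_sum_range {r : ℝ≥0∞} (hr : r < 1) (a : ℕ → ℝ≥0∞) :
    ∑' n, r ^ n * a n = ∑' n, (1 - r) * r ^ n * ∑ k ∈ range (n + 1), a k := by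
  have tail (k : ℕ) : ∑' n, (if k ≤ n then (1 - r) * r ^ n else 0) = r ^ k := by
    rw [← ENNReal.summable.sum_add_tsum_nat_add' (k := k),
      sum_eq_zero fun n hn => if_neg (by simpa using hn), zero_add]
    simp_rw [if_pos (Nat.le_add_left _ _)]
    exact ENNReal.tsum_one_sub_mul_pow_add hr k
  calc ∑' k, r ^ k * a k
      = ∑' k, ∑' n, (if k ≤ n then (1 - r) * r ^ n else 0) * a k := by
        simp_rw [ENNReal.tsum_mul_right, tail]
    _ = ∑' n, ∑' k, (if k ≤ n then (1 - r) * r ^ n else 0) * a k := ENNReal.tsum_comm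
    _ = ∑' n, (1 - r) * r ^ n * ∑ k ∈ range (n + 1), a k := by
        refine tsum_congr fun n => ?_
        rw [tsum_eq_sum (s := range (n + 1)) fun k hk => by simp_all, mul_sum]
        exact sum_congr rfl fun k hk => by rw [if_pos (by simpa [Nat.lt_succ_iff] using hk)]

theorem ENNReal.tsum_pow_mul_le_two_mul_of_sum_range_le {r : ℝ≥0∞} (hr : r < 1) {N : ℕ}
    (hrN : 1 ≤ 2 * r ^ N) {a b : ℕ → ℝ≥0∞} {C : ℝ≥0∞}
    (hab : ∀ n, N ≤ n → ∑ k ∈ range (n + 1), a k ≤ C * ∑ k ∈ range (n + 1), b k) :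
    ∑' n, r ^ n * a n ≤ 2 * C * ∑' n, r ^ n * b n := by
  set p : ℕ → ℝ≥0∞ := fun n => (1 - r) * r ^ n
  set S : ℕ → ℝ≥0∞ := fun n => ∑ k ∈ range (n + 1), a k
  have hS : Monotone S := fun m n hmn => sum_le_sum_of_subset (range_subset_range.2 (by omega))
  have tail := ENNReal.tsum_one_sub_mul_pow_add hr
  have head : ∑ j ∈ range N, p j ≤ r ^ N := by
    have htotal : ∑ j ∈ range N, p j + r ^ N = 1 := by
      rw [← tail N, ENNReal.summable.sum_add_tsum_nat_add']
      simpa using tail 0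
    refine (ENNReal.add_le_add_iff_right (ENNReal.pow_ne_top (n := N) (ne_top_of_lt hr))).1 ?_
    rwa [htotal, ← two_mul]
  set T := ∑' i, p (i + N) * S (i + N)
  have hT : r ^ N * S N ≤ T := calc
    r ^ N * S N = ∑' i, p (i + N) * S N := by rw [ENNReal.tsum_mul_right, tail]
    _ ≤ T := ENNReal.tsum_le_tsum fun i => by gcongr; exact hS (by omega)
  calc ∑' n, r ^ n * a n = ∑ j ∈ range N, p j * S j + T := by
        rw [ENNReal.tsum_pow_mul_eq_tsum_mul_sum_range hr, ENNReal.summable.sum_add_tsum_nat_add']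
    _ ≤ r ^ N * S N + T := by
        gcongr
        calc ∑ j ∈ range N, p j * S j ≤ ∑ j ∈ range N, p j * S N :=
              sum_le_sum fun j hj => by gcongr; exact hS (mem_range.1 hj).le
          _ ≤ r ^ N * S N := by rw [← sum_mul]; gcongr
    _ ≤ 2 * T := by rw [two_mul]; exact add_le_add_left hT _
    _ ≤ 2 * ∑' i, p (i + N) * (C * ∑ k ∈ range (i + N + 1), b k) :=
        mul_le_mul_right (ENNReal.tsum_le_tsum fun i => mul_le_mul_right (hab _ (by omega)) _) _
    _ = 2 * (C * ∑' i, p (i + N) * ∑ k ∈ range (i + N + 1), b k) := by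
        simp_rw [← ENNReal.tsum_mul_left, mul_left_comm C]
    _ ≤ 2 * (C * ∑' n, p n * ∑ k ∈ range (n + 1), b k) :=
        mul_le_mul_right (mul_le_mul_right
          (le_add_self.trans_eq (ENNReal.summable.sum_add_tsum_nat_add' (k := N))) _) _
    _ = 2 * C * ∑' n, r ^ n * b n := by
        rw [ENNReal.tsum_pow_mul_eq_tsum_mul_sum_range hr, mul_assoc]

end AbelSummation

structure IsTransferOperator {X : Type*} [MeasurableSpace X] (μ : Measure X) (T : X → X)
    (L : (X → ℝ≥0∞) → (X → ℝ≥0∞)) : Prop where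
  measurable : Measurable T
  measurable_apply : ∀ u, Measurable u → Measurable (L u)
  lintegral_comp_mul : ∀ u v : X → ℝ≥0∞, Measurable u → Measurable v →
    ∫⁻ x, v (T x) * u x ∂μ = ∫⁻ x, v x * L u x ∂μ

namespace IsTransferOperator

variable {X : Type*} [MeasurableSpace X] {μ : Measure X} {T : X → X}
  {L : (X → ℝ≥0∞) → (X → ℝ≥0∞)}

theorem iterate (hL : IsTransferOperator μ T L) (m : ℕ) : IsTransferOperator μ T^[m] L^[m] := by
  induction m with
  | zero => exact ⟨measurable_id, fun _ hu => hu, fun _ _ _ _ => rfl⟩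
  | succ m ih =>
    refine ⟨hL.measurable.iterate _, fun u hu => ih.measurable_apply _ (hL.measurable_apply u hu),
      fun u v hu hv => ?_⟩
    simp only [Function.iterate_succ_apply]
    rw [← ih.lintegral_comp_mul _ _ (hL.measurable_apply u hu) hv]
    exact hL.lintegral_comp_mul u (v ∘ T^[m]) hu (hv.comp ih.measurable)

theorem setLIntegral_eq (hL : IsTransferOperator μ T L) {u : X → ℝ≥0∞} (hu : Measurable u)
    {s : Set X} (hs : MeasurableSet s) :
    ∫⁻ x in s, L u x ∂μ = ∫⁻ x in T ⁻¹' s, u x ∂μ := by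
  calc ∫⁻ x in s, L u x ∂μ = ∫⁻ x, s.indicator 1 x * L u x ∂μ := by
        rw [← lintegral_indicator hs]
        congr 1 with x
        by_cases hx : x ∈ s <;> simp [hx]
    _ = ∫⁻ x, s.indicator 1 (T x) * u x ∂μ :=
        (hL.lintegral_comp_mul u _ hu (measurable_one.indicator hs)).symm
    _ = ∫⁻ x in T ⁻¹' s, u x ∂μ := by
        rw [← lintegral_indicator (hL.measurable hs)]
        congr 1 with x
        by_cases hx : T x ∈ s <;> simp [hx]

theorem ae_eq_tsum_mul [SigmaFinite μ] (hL : IsTransferOperator μ T L) {f : ℕ → X → ℝ≥0∞}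
    (hf : ∀ n, Measurable (f n)) (c : ℕ → ℝ≥0∞) :
    L (fun x => ∑' n, c n * f n x) =ᵐ[μ] fun x => ∑' n, c n * L (f n) x := by
  have hF : Measurable fun x => ∑' n, c n * f n x :=
    Measurable.tsum fun n => (hf n).const_mul _
  refine ae_eq_of_forall_setLIntegral_eq_of_sigmaFinite (hL.measurable_apply _ hF)
    (Measurable.tsum fun n => (hL.measurable_apply _ (hf n)).const_mul _) fun s hs _ => ?_
  rw [hL.setLIntegral_eq hF hs, lintegral_tsum fun n => ((hf n).const_mul _).aemeasurable,
    lintegral_tsum fun n => ((hL.measurable_apply _ (hf n)).const_mul _).aemeasurable]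
  refine tsum_congr fun n => ?_
  rw [lintegral_const_mul _ (hf n), lintegral_const_mul _ (hL.measurable_apply _ (hf n)),
    hL.setLIntegral_eq (hf n) hs]

open Finset in
theorem ae_one_le_two_mul_sum_iterate_div [SigmaFinite μ] (hL : IsTransferOperator μ T L)
    {v : ℕ → X → ℝ≥0∞} (hv : ∀ n, Measurable (v n)) {a : ℕ → ℝ≥0∞} {r : ℝ≥0∞} (hr : r < 1)
    {N : ℕ} (hrN : 1 ≤ 2 * r ^ N) (h0 : ∑' n, r ^ n * a n ≠ 0) (htop : ∑' n, r ^ n * a n ≠ ⊤)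
    {C : ℝ≥0∞} {K : ℕ} {ν : Measure X} (hν : ν ≪ μ)
    (hsweep : ∀ n, N ≤ n → ∀ᵐ x ∂ν,
      ∑ k ∈ range (n + 1), a k ≤ C * ∑ k ∈ range (n + 1), ∑ m ∈ range (K + 1), L^[m] (v k) x) :
    ∀ᵐ x ∂ν, 1 ≤ 2 * C * ∑ m ∈ range (K + 1),
      L^[m] (fun y => (∑' n, r ^ n * v n y) / ∑' n, r ^ n * a n) x := by
  set B := ∑' n, r ^ n * a n
  have hiter (m : ℕ) : L^[m] (fun y => (∑' n, r ^ n * v n y) / B)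
      =ᵐ[μ] fun x => ∑' n, B⁻¹ * r ^ n * L^[m] (v n) x := by
    simpa only [ENNReal.div_eq_inv_mul, ← ENNReal.tsum_mul_left, mul_assoc]
      using (hL.iterate m).ae_eq_tsum_mul hv fun n => B⁻¹ * r ^ n
  filter_upwards [hν.ae_le (ae_all_iff.2 hiter),
    ae_all_iff.2 fun n => eventually_imp_distrib_left.2 (hsweep n)] with x hx hsw
  have hsum : ∑ m ∈ range (K + 1), L^[m] (fun y => (∑' n, r ^ n * v n y) / B) x
      = B⁻¹ * ∑' n, r ^ n * ∑ m ∈ range (K + 1), L^[m] (v n) x := by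
    simp_rw [hx, ← ENNReal.tsum_mul_left, mul_sum, mul_assoc]
    exact (Summable.tsum_finsetSum fun m _ => ENNReal.summable).symm
  calc 1 = B⁻¹ * B := (ENNReal.inv_mul_cancel h0 htop).symm
    _ ≤ B⁻¹ * (2 * C * ∑' n, r ^ n * ∑ m ∈ range (K + 1), L^[m] (v n) x) :=
        mul_le_mul_right (ENNReal.tsum_pow_mul_le_two_mul_of_sum_range_le hr hrN hsw) _
    _ = _ := by rw [hsum]; ring

end IsTransferOperator

theorem ENNReal.ofReal_exp_neg_mul (n : ℕ) (s : ℝ) :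
    ENNReal.ofReal (exp (-(n : ℝ) * s)) = ENNReal.ofReal (exp (-s)) ^ n := by
  rw [neg_mul, ← mul_neg, exp_nat_mul, ENNReal.ofReal_pow (exp_nonneg _)]

theorem Habel_eq {X : Type*} [MeasurableSpace X] (μ : Measure X) (Y : Set X)
    (v : ℕ → X → ℝ≥0∞) (lam : ℝ → ℝ) (t : ℝ) :
    Habel μ Y v lam t = fun x => (∑' n, ENNReal.ofReal (exp (-lam t)) ^ n * v n x) /
      ∑' n, ENNReal.ofReal (exp (-lam t)) ^ n * ∫⁻ y in Y, v n y ∂μ := by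
  ext x
  simp only [Habel, ENNReal.ofReal_exp_neg_mul]

theorem stmt10_general {X : Type*} [MeasurableSpace X] {μ : Measure X} [SigmaFinite μ]
    {T : X → X} (herg : Ergodic T μ) {Y : Set X}
    (hatT : (X → ℝ≥0∞) → (X → ℝ≥0∞))
    (hatTmeas : ∀ u, Measurable u → Measurable (hatT u))
    (hatTdual : ∀ u v : X → ℝ≥0∞, Measurable u → Measurable v →
      ∫⁻ x, v (T x) * u x ∂μ = ∫⁻ x, v x * hatT u x ∂μ)
    (v : ℕ → X → ℝ≥0∞) (hvmeas : ∀ n, Measurable (v n))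
    (hvpos : ∀ s : ℝ, 0 < s →
      0 < ∑' n : ℕ, ENNReal.ofReal (Real.exp (-(n : ℝ) * s)) * ∫⁻ y in Y, v n y ∂μ ∧
      (∑' n : ℕ, ENNReal.ofReal (Real.exp (-(n : ℝ) * s)) * ∫⁻ y in Y, v n y ∂μ) < ⊤)
    (lam : ℝ → ℝ) (hlampos : ∀ t, 0 < lam t) (hlam : Tendsto lam atTop (𝓝 0))
    (N : ℕ) (C : ℝ≥0∞) (K : ℕ)
    (hsweep : ∀ n : ℕ, N ≤ n → ∀ᵐ x ∂μ.restrict Y,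
      ∑ k ∈ Finset.range (n + 1), ∫⁻ y in Y, v k y ∂μ ≤
        C * ∑ k ∈ Finset.range (n + 1), ∑ m ∈ Finset.range (K + 1), (hatT^[m] (v k)) x) :
    ∃ t0 > (0:ℝ), ∀ t, t0 ≤ t → ∀ᵐ x ∂μ.restrict Y,
      1 ≤ 2 * C * ∑ m ∈ Finset.range (K + 1), (hatT^[m] (Habel μ Y v lam t)) x := by
  have hL : IsTransferOperator μ T hatT := ⟨herg.measurable, hatTmeas, hatTdual⟩
  have hlim : Tendsto (fun t => exp (-(N : ℝ) * lam t)) atTop (𝓝 1) := by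
    simpa only [mul_zero, exp_zero, Function.comp_def] using
      (continuous_exp.tendsto (-(N : ℝ) * 0)).comp (hlam.const_mul (-(N : ℝ)))
  obtain ⟨t1, ht1⟩ :=
    eventually_atTop.1 (hlim.eventually (lt_mem_nhds (by norm_num : (2 : ℝ)⁻¹ < 1)))
  refine ⟨max t1 1, by positivity, fun t ht => ?_⟩
  set r := ENNReal.ofReal (exp (-lam t))
  have hr : r < 1 := ENNReal.ofReal_lt_one.2 (exp_lt_one_iff.2 (neg_lt_zero.2 (hlampos t)))
  have hrN : 1 ≤ 2 * r ^ N := by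
    rw [← ENNReal.inv_le_iff_le_mul (by simp) (by simp), ← ENNReal.ofReal_exp_neg_mul,
      ← ENNReal.ofReal_ofNat 2, ← ENNReal.ofReal_inv_of_pos two_pos]
    exact ENNReal.ofReal_le_ofReal (ht1 t (le_of_max_le_left ht)).le
  obtain ⟨hB0, hBtop⟩ := hvpos (lam t) (hlampos t)
  simp only [ENNReal.ofReal_exp_neg_mul] at hB0 hBtop
  rw [Habel_eq]
  exact hL.ae_one_le_two_mul_sum_iterate_div hvmeas hr hrN hB0.ne' hBtop.ne
    Measure.absolutelyContinuous_restrict hsweep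

/-- If the Cesàro averages of `v_n` are uniformly sweeping for `1_Y`, then the Abel
averages `H_t` are eventually uniformly sweeping (in `K` steps) for `1_Y`. -/
theorem stmt10 {X : Type*} [MeasurableSpace X] {μ : Measure X} [SigmaFinite μ]
    {T : X → X} (hcons : Conservative T μ) (herg : Ergodic T μ)
    (hinf : μ Set.univ = ⊤) {Y : Set X} (hYm : MeasurableSet Y)
    (hY0 : 0 < μ Y) (hY1 : μ Y < ⊤)
    (hatT : (X → ℝ≥0∞) → (X → ℝ≥0∞))
    (hatTmeas : ∀ u, Measurable u → Measurable (hatT u))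
    (hatTdual : ∀ u v : X → ℝ≥0∞, Measurable u → Measurable v →
      ∫⁻ x, v (T x) * u x ∂μ = ∫⁻ x, v x * hatT u x ∂μ)
    (v : ℕ → X → ℝ≥0∞) (hvmeas : ∀ n, Measurable (v n))
    (hvbd : ∀ n, ∃ M : ℝ≥0∞, M ≠ ⊤ ∧ ∀ᵐ x ∂μ, v n x ≤ M)
    (hvsupp : ∀ n x, x ∉ Y → v n x = 0)
    (hvpos : ∀ s : ℝ, 0 < s →
      0 < ∑' n : ℕ, ENNReal.ofReal (Real.exp (-(n : ℝ) * s)) * ∫⁻ y in Y, v n y ∂μ ∧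
      (∑' n : ℕ, ENNReal.ofReal (Real.exp (-(n : ℝ) * s)) * ∫⁻ y in Y, v n y ∂μ) < ⊤)
    (lam : ℝ → ℝ) (hlampos : ∀ t, 0 < lam t) (hlam : Tendsto lam atTop (𝓝 0))
    (N : ℕ) (hN : 0 < ∑ k ∈ Finset.range (N + 1), ∫⁻ y in Y, v k y ∂μ)
    (C : ℝ≥0∞) (hC : 0 < C) (hCtop : C ≠ ⊤) (K : ℕ)
    (hsweep : ∀ n : ℕ, N ≤ n → ∀ᵐ x ∂μ.restrict Y,
      ∑ k ∈ Finset.range (n + 1), ∫⁻ y in Y, v k y ∂μ ≤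
        C * ∑ k ∈ Finset.range (n + 1), ∑ m ∈ Finset.range (K + 1), (hatT^[m] (v k)) x) :
    ∃ t0 > (0:ℝ), ∀ t, t0 ≤ t → ∀ᵐ x ∂μ.restrict Y,
      1 ≤ 2 * C * ∑ m ∈ Finset.range (K + 1), (hatT^[m] (Habel μ Y v lam t)) x :=
  stmt10_general herg hatT hatTmeas hatTdual v hvmeas hvpos lam hlampos hlam N C K hsweep
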